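/- arXiv:1910.02867 — 6 statements merged into one kernel-verified Lean document; each statement's English description precedes it below -/
import Mathlib

section
/- Let Y ⊆ ℝ^m with convex free disposal hull, and let y* ∈ WMin Y. Then there exists a nonzero vector a ∈ ℝ^m with all coordinates nonnegative such that ⟨a, y − y*⟩ ≥ 0 for all y in the free disposal hull of Y. -/
open Pointwise

/-- The `I`-efficient set of `Y ⊆ ℝ^m`. -/
def MinI {m : ℕ} (I : Finset (Fin m)) (Y : Set (Fin m → ℝ)) : Set (Fin m → ℝ) :=
  {y' | y' ∈ Y ∧ ¬ ∃ y ∈ Y, (∀ i ∈ I, y i ≤ y' i) ∧ ∃ j ∈ I, y j < y' j}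

/-- The `I`-weakly-efficient set of `Y ⊆ ℝ^m`. -/
def WMinI {m : ℕ} (I : Finset (Fin m)) (Y : Set (Fin m → ℝ)) : Set (Fin m → ℝ) :=
  {y' | y' ∈ Y ∧ ¬ ∃ y ∈ Y, ∀ i ∈ I, y i < y' i}

/-- The free disposal hull `Y + ℝ^m_{≥0}`. -/
def FDH {m : ℕ} (Y : Set (Fin m → ℝ)) : Set (Fin m → ℝ) :=
  Y + {z : Fin m → ℝ | ∀ i, 0 ≤ z i}

theorem stmt_4 {m : ℕ} (Y : Set (Fin m → ℝ)) (hconv : Convex ℝ (FDH Y))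
    (ystar : Fin m → ℝ) (hy : ystar ∈ WMinI Finset.univ Y) :
    ∃ a : Fin m → ℝ, a ≠ 0 ∧ (∀ i, 0 ≤ a i) ∧
      ∀ y ∈ FDH Y, 0 ≤ ∑ i, a i * (y i - ystar i) := by
  obtain ⟨hyY, hnot⟩ := hy
  set s : Set (Fin m → ℝ) := {y | ∀ i, y i < ystar i} with hs
  have hsopen : IsOpen s := by
    have : s = ⋂ i, {y : Fin m → ℝ | y i < ystar i} := by
      ext y; simp [hs]
    rw [this]
    exact isOpen_iInter_of_finite fun i =>
      isOpen_lt (continuous_apply i) continuous_const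
  have hsconv : Convex ℝ s := by
    have hseq : s = ⋂ i, {y : Fin m → ℝ | y i < ystar i} := by
      ext y; simp [hs]
    rw [hseq]
    exact convex_iInter fun i =>
      convex_halfSpace_lt ⟨fun a b => rfl, fun c x => rfl⟩ _
  have hdisj : Disjoint s (FDH Y) := by
    rw [Set.disjoint_left]
    rintro y hyS hyF
    rw [FDH, Set.mem_add] at hyF
    obtain ⟨z, hz, w, hw, rfl⟩ := hyF
    refine hnot ⟨z, hz, fun i _ => ?_⟩
    have h1 := hyS i
    have h2 := hw i
    simp only [Pi.add_apply] at h1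
    linarith
  obtain ⟨f, u, hfu, huf⟩ := geometric_hahn_banach_open hsconv hsopen hconv hdisj
  set a : Fin m → ℝ := fun i => f (Pi.single i 1) with ha
  have hf : ∀ y : Fin m → ℝ, f y = ∑ i, y i * a i := by
    intro y
    conv_lhs => rw [← Finset.univ_sum_single y]
    rw [map_sum]
    refine Finset.sum_congr rfl fun i _ => ?_
    have h1 : Pi.single i (y i) = y i • (Pi.single i (1 : ℝ) : Fin m → ℝ) := by
      rw [← Pi.single_smul, smul_eq_mul, mul_one]
    rw [h1, map_smul, smul_eq_mul, ha]
  have hystarF : ystar ∈ FDH Y := by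
    rw [FDH, Set.mem_add]
    exact ⟨ystar, hyY, 0, fun i => le_refl 0, add_zero _⟩
  have hule : u ≤ f ystar := huf ystar hystarF
  have hone : (ystar - 1) ∈ s := by
    intro i
    simp [hs]
  have hf1 : 0 < f 1 := by
    have := hfu _ hone
    rw [map_sub] at this
    linarith
  -- all coordinates nonnegative
  have hanneg : ∀ i, 0 ≤ a i := by
    intro i
    by_contra hneg
    push_neg at hneg
    set t : ℝ := (u - f ystar + f 1 + 1) / (-(a i)) with ht
    have hfystar : f ystar - f 1 < u := by
      have := hfu _ hone
      rw [map_sub] at this; linarith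
    have htpos : 0 < t := by
      apply div_pos <;> linarith
    have hmem : (ystar - 1 - t • (Pi.single i 1 : Fin m → ℝ)) ∈ s := by
      intro j
      simp only [Pi.sub_apply, Pi.smul_apply, Pi.one_apply, smul_eq_mul]
      rcases eq_or_ne i j with rfl | hij
      · simp only [Pi.single_eq_same]
        nlinarith
      · simp [Pi.single_eq_of_ne (Ne.symm hij)]
    have hlt := hfu _ hmem
    rw [map_sub, map_sub, map_smul, smul_eq_mul] at hlt
    have hfa : f (Pi.single i 1) = a i := rfl
    rw [hfa] at hlt
    have h' : t * (-(a i)) = u - f ystar + f 1 + 1 := by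
      rw [ht]
      exact div_mul_cancel₀ _ (by linarith)
    have hta : t * a i = -(u - f ystar + f 1 + 1) := by linear_combination -h'
    rw [hta] at hlt
    linarith
  -- f ystar ≤ u
  have hle : f ystar ≤ u := by
    by_contra h
    push_neg at h
    set δ : ℝ := (f ystar - u) / (2 * f 1) with hδ
    have hδpos : 0 < δ := by
      apply div_pos <;> linarith
    have hmem : (ystar - δ • (1 : Fin m → ℝ)) ∈ s := by
      intro j
      simp only [Pi.sub_apply, Pi.smul_apply, Pi.one_apply, smul_eq_mul, mul_one]
      linarith
    have hlt := hfu _ hmem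
    rw [map_sub, map_smul, smul_eq_mul] at hlt
    have : δ * f 1 = (f ystar - u) / 2 := by
      rw [hδ]; field_simp
    rw [this] at hlt
    linarith
  refine ⟨a, ?_, hanneg, ?_⟩
  · intro h0
    have : f 1 = 0 := by
      rw [hf]
      simp [h0]
    linarith
  · intro y hyF
    have h1 : u ≤ f y := huf y hyF
    have h2 : f y - f ystar = ∑ i, a i * (y i - ystar i) := by
      rw [hf y, hf ystar, ← Finset.sum_sub_distrib]
      refine Finset.sum_congr rfl fun i _ => by ring
    linarith
end

section
/- Let Y ⊆ ℝ^m with convex free disposal hull, and let y* ∈ WMin Y. Then there exists a nonempty subset I of M = {1,...,m} such that y* ∈ Min_I Y. -/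
open Pointwise

theorem stmt_5 {m : ℕ} (Y : Set (Fin m → ℝ)) (hconv : Convex ℝ (FDH Y))
    (ystar : Fin m → ℝ) (hy : ystar ∈ WMinI Finset.univ Y) :
    ∃ I : Finset (Fin m), I.Nonempty ∧ ystar ∈ MinI I Y := by
  classical
  obtain ⟨hyY, hw⟩ := hy
  rcases Nat.eq_zero_or_pos m with hm | hm
  · subst hm
    exact absurd ⟨ystar, hyY, fun i _ => i.elim0⟩ hw
  have hne : Nonempty (Fin m) := ⟨⟨0, hm⟩⟩
  have hmpos : (0:ℝ) < m := by exact_mod_cast hm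
  set Z : Set (Fin m → ℝ) := FDH Y ∩ {y | ∀ i, y i ≤ ystar i} with hZdef
  have hhalf : Convex ℝ {y : Fin m → ℝ | ∀ i, y i ≤ ystar i} := by
    intro x hx y hy a b ha hb hab i
    have h1 := hx i
    have h2 := hy i
    simp only [Pi.add_apply, Pi.smul_apply, smul_eq_mul]
    have h3 : a * ystar i + b * ystar i = ystar i := by rw [← add_mul, hab, one_mul]
    nlinarith [mul_le_mul_of_nonneg_left h1 ha, mul_le_mul_of_nonneg_left h2 hb]
  have hZconv : Convex ℝ Z := hconv.inter hhalf
  have hYFDH : ∀ u ∈ Y, u ∈ FDH Y := by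
    intro u hu
    exact ⟨u, hu, 0, fun i => le_rfl, by simp⟩
  have hystarZ : ystar ∈ Z := ⟨hYFDH _ hyY, fun i => le_rfl⟩
  have hFDHlb : ∀ z ∈ FDH Y, ∃ u ∈ Y, ∀ i, u i ≤ z i := by
    intro z hz
    obtain ⟨u, hu, v, hv, huv⟩ := hz
    refine ⟨u, hu, fun i => ?_⟩
    have h1 := hv i
    have h2 : u i + v i = z i := congrFun huv i
    linarith
  set I : Finset (Fin m) := Finset.univ.filter (fun i => ∀ z ∈ Z, z i = ystar i) with hIdef
  have hIZ : ∀ i ∈ I, ∀ z ∈ Z, z i = ystar i := by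
    intro i hi
    exact (Finset.mem_filter.mp hi).2
  have hchoice : ∀ i, ∃ zc ∈ Z, (i ∉ I → zc i < ystar i) := by
    intro i
    by_cases hi : i ∈ I
    · exact ⟨ystar, hystarZ, fun h => absurd hi h⟩
    · simp only [hIdef, Finset.mem_filter, Finset.mem_univ, true_and, not_forall] at hi
      obtain ⟨z, hz, hne'⟩ := hi
      exact ⟨z, hz, fun _ => lt_of_le_of_ne (hz.2 i) hne'⟩
  choose zc hzcZ hzclt using hchoice
  set zavg : Fin m → ℝ := ∑ k : Fin m, (m : ℝ)⁻¹ • zc k with hzavgdef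
  have hzavgZ : zavg ∈ Z := by
    apply hZconv.sum_mem (fun k _ => by positivity)
    · rw [Finset.sum_const, Finset.card_univ, Fintype.card_fin, nsmul_eq_mul]
      field_simp
    · exact fun k _ => hzcZ k
  have hzavg_apply : ∀ i, zavg i = ∑ k : Fin m, (m : ℝ)⁻¹ * zc k i := by
    intro i
    simp [hzavgdef, Finset.sum_apply]
  have hzavg_lt : ∀ i ∉ I, zavg i < ystar i := by
    intro i hiI
    rw [hzavg_apply]
    have h2 : ystar i = ∑ _k : Fin m, (m:ℝ)⁻¹ * ystar i := by
      rw [Finset.sum_const, Finset.card_univ, Fintype.card_fin, nsmul_eq_mul]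
      field_simp
    rw [h2]
    apply Finset.sum_lt_sum
    · intro k _
      have h3 := (hzcZ k).2 i
      have h4 : (0:ℝ) < (m:ℝ)⁻¹ := by positivity
      nlinarith
    · refine ⟨i, Finset.mem_univ i, ?_⟩
      have h3 := hzclt i hiI
      have h4 : (0:ℝ) < (m:ℝ)⁻¹ := by positivity
      nlinarith
  have hInonempty : I.Nonempty := by
    by_contra hIe
    rw [Finset.not_nonempty_iff_eq_empty] at hIe
    obtain ⟨u, huY, hul⟩ := hFDHlb zavg hzavgZ.1
    exact hw ⟨u, huY, fun i _ => lt_of_le_of_lt (hul i) (hzavg_lt i (by simp [hIe]))⟩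
  refine ⟨I, hInonempty, hyY, ?_⟩
  rintro ⟨y, hyY2, hle, j, hjI, hjlt⟩
  set lam : Fin m → ℝ := fun i =>
    if y i ≤ ystar i then 1 else (ystar i - zavg i) / (y i - zavg i) with hlamdef
  have hnotI : ∀ i, ¬ (y i ≤ ystar i) → i ∉ I := by
    intro i h hiI
    exact h (hle i hiI)
  have hlam_pos : ∀ i, 0 < lam i := by
    intro i
    simp only [hlamdef]
    split_ifs with h
    · norm_num
    · have hiI : i ∉ I := hnotI i h
      push_neg at h
      have h1 := hzavg_lt i hiI
      have h2 : zavg i < y i := lt_trans h1 h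
      have h3 : 0 < ystar i - zavg i := by linarith
      have h4 : 0 < y i - zavg i := by linarith
      positivity
  have hlam_le1 : ∀ i, lam i ≤ 1 := by
    intro i
    simp only [hlamdef]
    split_ifs with h
    · exact le_rfl
    · have hiI : i ∉ I := hnotI i h
      push_neg at h
      have h1 := hzavg_lt i hiI
      have h2 : zavg i < y i := lt_trans h1 h
      rw [div_le_one (by linarith)]
      linarith

  set l : ℝ := Finset.univ.inf' Finset.univ_nonempty lam with hldef
  have hlpos : 0 < l := by
    rw [hldef, Finset.lt_inf'_iff]
    exact fun i _ => hlam_pos i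
  have hl_le1 : l ≤ 1 :=
    le_trans (Finset.inf'_le _ (Finset.mem_univ j)) (hlam_le1 j)
  have hkey : ∀ i, l * (y i - zavg i) ≤ ystar i - zavg i := by
    intro i
    have hl_le : l ≤ lam i := Finset.inf'_le _ (Finset.mem_univ i)
    by_cases h : y i ≤ ystar i
    · have hz := hzavgZ.2 i
      rcases le_or_gt (y i) (zavg i) with h2 | h2
      · nlinarith
      · nlinarith
    · have hiI : i ∉ I := hnotI i h
      push_neg at h
      have h1 := hzavg_lt i hiI
      have h2 : zavg i < y i := lt_trans h1 h
      have hlam_eq : lam i = (ystar i - zavg i) / (y i - zavg i) := if_neg (not_le.mpr h)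
      have h3 : lam i * (y i - zavg i) = ystar i - zavg i := by
        rw [hlam_eq, div_mul_cancel₀ _ (by intro hc; rw [sub_eq_zero] at hc; exact absurd hc.symm (ne_of_lt h2) : y i - zavg i ≠ 0)]
      nlinarith
  set w : Fin m → ℝ := l • y + (1 - l) • zavg with hwdef
  have hwFDH : w ∈ FDH Y := hconv (hYFDH _ hyY2) hzavgZ.1 hlpos.le (by linarith) (by ring)
  have hwZ : w ∈ Z := by
    refine ⟨hwFDH, fun i => ?_⟩
    have h1 := hkey i
    have h2 := hzavgZ.2 i
    simp only [hwdef, Pi.add_apply, Pi.smul_apply, smul_eq_mul]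
    nlinarith
  have hwj : w j = ystar j := hIZ j hjI w hwZ
  have hwj2 : w j < ystar j := by
    have h2 := hzavgZ.2 j
    simp only [hwdef, Pi.add_apply, Pi.smul_apply, smul_eq_mul]
    nlinarith
  rw [hwj] at hwj2
  exact lt_irrefl _ hwj2
end

section
/- If y* ∈ WMin Y and a ∈ ℝ^m has nonnegative coordinates with ⟨a, y − y*⟩ ≥ 0 for all y ∈ Y, and I = {i : a_i > 0} is nonempty, then y* ∈ Min_I Y. -/
open Pointwise

theorem stmt_6 {m : ℕ} (Y : Set (Fin m → ℝ))
    (ystar : Fin m → ℝ) (hy : ystar ∈ WMinI Finset.univ Y)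
    (a : Fin m → ℝ) (ha : ∀ i, 0 ≤ a i)
    (hsep : ∀ y ∈ Y, 0 ≤ ∑ i, a i * (y i - ystar i))
    (hne : (Finset.univ.filter fun i => 0 < a i).Nonempty) :
    ystar ∈ MinI (Finset.univ.filter fun i => 0 < a i) Y := by
  refine ⟨hy.1, ?_⟩
  rintro ⟨y, hyY, hle, j, hj, hjlt⟩
  have hjpos : 0 < a j := (Finset.mem_filter.mp hj).2
  have hsum : ∑ i, a i * (y i - ystar i) < 0 := by
    have h1 : ∀ i ∈ (Finset.univ : Finset (Fin m)), i ≠ j →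
        a i * (y i - ystar i) ≤ 0 := by
      intro i _ _
      rcases lt_or_eq_of_le (ha i) with hpos | hzero
      · have : y i ≤ ystar i := hle i (Finset.mem_filter.mpr ⟨Finset.mem_univ i, hpos⟩)
        exact mul_nonpos_of_nonneg_of_nonpos (le_of_lt hpos) (by linarith)
      · simp [← hzero]
    have h2 : a j * (y j - ystar j) < 0 :=
      mul_neg_of_pos_of_neg hjpos (by linarith)
    rw [← Finset.add_sum_erase _ _ (Finset.mem_univ j)]
    have h3 : ∑ i ∈ Finset.univ.erase j, a i * (y i - ystar i) ≤ 0 :=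
      Finset.sum_nonpos fun i hi => h1 i (Finset.mem_univ i) (Finset.ne_of_mem_erase hi)
    linarith
  exact absurd (hsep y hyY) (not_le.mpr hsum)
end

section
/- Let f : X → ℝ^m be a mapping on a set X, I a nonempty subset of {1,...,m}, and f_I the mapping whose components are the f_i for i ∈ I. If the restriction of f_I to the set E(f_I, X) of I-efficient solutions is injective, then E(f_I, X) ⊆ E(f, X). -/
/-- The set of `I`-efficient solutions of minimizing `f` over `X`. -/
def Eff {α : Type*} {m : ℕ} (I : Finset (Fin m)) (f : α → Fin m → ℝ) (X : Set α) : Set α :=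
  {x' | x' ∈ X ∧ ¬ ∃ x ∈ X, (∀ i ∈ I, f x i ≤ f x' i) ∧ ∃ j ∈ I, f x j < f x' j}

/-- The set of weakly efficient solutions of minimizing `f` over `X`. -/
def WEff {α : Type*} {m : ℕ} (I : Finset (Fin m)) (f : α → Fin m → ℝ) (X : Set α) : Set α :=
  {x' | x' ∈ X ∧ ¬ ∃ x ∈ X, ∀ i ∈ I, f x i < f x' i}

theorem stmt_8 {α : Type*} {m : ℕ} (X : Set α) (f : α → Fin m → ℝ)
    (I : Finset (Fin m)) (hI : I.Nonempty)
    (hinj : ∀ x ∈ Eff I f X, ∀ y ∈ Eff I f X, (∀ i ∈ I, f x i = f y i) → x = y) :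
    Eff I f X ⊆ Eff Finset.univ f X := by
  intro x' hx'
  obtain ⟨hx'X, hx'eff⟩ := hx'
  refine ⟨hx'X, ?_⟩
  rintro ⟨x, hxX, hle, j, -, hlt⟩
  -- on I, f x i ≤ f x' i
  have hleI : ∀ i ∈ I, f x i ≤ f x' i := fun i _ => hle i (Finset.mem_univ i)
  -- equality on I, else x' not I-efficient
  have heq : ∀ i ∈ I, f x i = f x' i := by
    intro i hi
    by_contra hne
    exact hx'eff ⟨x, hxX, hleI, i, hi, lt_of_le_of_ne (hleI i hi) hne⟩
  -- x is I-efficient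
  have hxeff : x ∈ Eff I f X := by
    refine ⟨hxX, ?_⟩
    rintro ⟨y, hyX, hyle, k, hk, hylt⟩
    exact hx'eff ⟨y, hyX, fun i hi => (hyle i hi).trans (heq i hi).le,
      k, hk, (hylt.trans_le (heq k hk).le)⟩
  have := hinj x hxeff x' ⟨hx'X, hx'eff⟩ heq
  subst this
  exact lt_irrefl _ hlt
end

section
/- For the modified multi-objective LASSO problem of minimizing f̃ = (f̃_1, f̃_2) over ℝ^n, where f̃_1(θ) = (1/(2m))‖Xθ − y‖² + ε|θ|₁ and f̃_2(θ) = (1+ε)|θ|₁ with ε > 0, every weakly efficient solution is efficient: WE(f̃, ℝ^n) = E(f̃, ℝ^n). -/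
/-- The set of efficient solutions of a bi-objective problem over `ℝ^n`. -/
def Eff2 {n : ℕ} (f : (Fin n → ℝ) → Fin 2 → ℝ) : Set (Fin n → ℝ) :=
  {θ' | ¬ ∃ θ, (∀ i, f θ i ≤ f θ' i) ∧ ∃ j, f θ j < f θ' j}

/-- The set of weakly efficient solutions of a bi-objective problem over `ℝ^n`. -/
def WEff2 {n : ℕ} (f : (Fin n → ℝ) → Fin 2 → ℝ) : Set (Fin n → ℝ) :=
  {θ' | ¬ ∃ θ, ∀ i, f θ i < f θ' i}

private lemma sq_combo (u v t : ℝ) (ht0 : 0 ≤ t) (ht1 : t ≤ 1) :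
    ((1 - t) * u + t * v) ^ 2 ≤ (1 - t) * u ^ 2 + t * v ^ 2 := by
  nlinarith [mul_nonneg (mul_nonneg ht0 (sub_nonneg.2 ht1)) (sq_nonneg (u - v))]

private lemma key {n : ℕ} (Q L : (Fin n → ℝ) → ℝ) (ε : ℝ) (hε : 0 < ε)
    (hLnn : ∀ θ, 0 ≤ L θ)
    (hLzero : ∀ θ, L θ = 0 → θ = 0)
    (hLsmul : ∀ (c : ℝ) θ, 0 ≤ c → L (c • θ) = c * L θ)
    (hLadd : ∀ θ θ', L (θ + θ') ≤ L θ + L θ')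
    (hQseg : ∀ θ (t : ℝ), 0 ≤ t → t ≤ 1 → Q ((1 - t) • θ) ≤ (1 - t) * Q θ + t * Q 0)
    (hQmid : ∀ θ θ', Q θ' < Q θ → Q ((1 / 2 : ℝ) • (θ + θ')) < (Q θ + Q θ') / 2) :
    WEff2 (fun θ => ![Q θ + ε * L θ, (1 + ε) * L θ]) =
      Eff2 (fun θ => ![Q θ + ε * L θ, (1 + ε) * L θ]) := by
  ext θ'
  simp only [WEff2, Eff2, Set.mem_setOf_eq]
  constructor
  · intro hW
    rintro ⟨θ, hle, j, hj⟩
    apply hW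
    have h0 : Q θ + ε * L θ ≤ Q θ' + ε * L θ' := by simpa using hle 0
    have h1 : (1 + ε) * L θ ≤ (1 + ε) * L θ' := by simpa using hle 1
    have hone : (0:ℝ) < 1 + ε := by linarith
    have hLle : L θ ≤ L θ' := le_of_mul_le_mul_left h1 hone
    by_cases hs0 : Q θ + ε * L θ < Q θ' + ε * L θ'
    · by_cases hs1 : L θ < L θ'
      · refine ⟨θ, ?_⟩
        rw [Fin.forall_fin_two]
        simp only [Matrix.cons_val_zero, Matrix.cons_val_one, Matrix.head_cons]
        exact ⟨hs0, mul_lt_mul_of_pos_left hs1 hone⟩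
      · have hLeq : L θ = L θ' := le_antisymm hLle (not_lt.1 hs1)
        by_cases hz : L θ' = 0
        · have hθ : θ = 0 := hLzero θ (hLeq.trans hz)
          have hθ' : θ' = 0 := hLzero θ' hz
          rw [hθ, hθ'] at hs0
          exact absurd hs0 (lt_irrefl _)
        · have hLpos : 0 < L θ' := (hLnn θ').lt_of_ne (Ne.symm hz)
          set s : ℝ := Q θ' + ε * L θ' - (Q θ + ε * L θ) with hs_def
          have hs : 0 < s := by simp only [hs_def]; linarith
          set B : ℝ := |Q 0 - Q θ| + 1 with hB_def
          have hB : 0 < B := by positivity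
          set t : ℝ := min (1/2 : ℝ) (s / (2 * B)) with ht_def
          have ht0 : 0 < t := lt_min (by norm_num) (by positivity)
          have ht1 : t ≤ 1 := le_trans (min_le_left _ _) (by norm_num)
          have htB : t * B ≤ s / 2 := by
            have h := mul_le_mul_of_nonneg_right (min_le_right (1/2 : ℝ) (s / (2 * B))) hB.le
            have : s / (2 * B) * B = s / 2 := by field_simp
            rw [this] at h
            exact h
          have hbound : t * (Q 0 - Q θ - ε * L θ) ≤ t * B := by
            apply mul_le_mul_of_nonneg_left _ ht0.le
            have h1 := le_abs_self (Q 0 - Q θ)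
            have h2 : 0 ≤ ε * L θ := mul_nonneg hε.le (hLnn θ)
            simp only [hB_def]; linarith
          have hQw := hQseg θ t ht0.le ht1
          have hLw : L ((1 - t) • θ) = (1 - t) * L θ := hLsmul _ _ (by linarith)
          clear_value s B t
          refine ⟨(1 - t) • θ, ?_⟩
          rw [Fin.forall_fin_two]
          simp only [Matrix.cons_val_zero, Matrix.cons_val_one, Matrix.head_cons, hLw]
          constructor
          · have hexp : (1 - t) * Q θ + t * Q 0 + ε * ((1 - t) * L θ) =
                (Q θ + ε * L θ) + t * (Q 0 - Q θ - ε * L θ) := by ring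
            simp only [hs_def] at hs htB
            linarith
          · apply mul_lt_mul_of_pos_left _ hone
            nlinarith [mul_pos ht0 hLpos, hLeq]
    · have he0 : Q θ + ε * L θ = Q θ' + ε * L θ' := le_antisymm h0 (not_lt.1 hs0)
      have hLlt : L θ < L θ' := by
        fin_cases j <;> simp only [Matrix.cons_val_zero, Matrix.cons_val_one,
          Matrix.head_cons, Fin.isValue] at hj
        · exact absurd hj hs0
        · exact lt_of_mul_lt_mul_left hj hone.le
      have hQgt : Q θ' < Q θ := by
        have := mul_lt_mul_of_pos_left hLlt hε
        linarith
      have hQm := hQmid θ θ' hQgt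
      have hLm : L ((1 / 2 : ℝ) • (θ + θ')) ≤ (L θ + L θ') / 2 := by
        rw [hLsmul _ _ (by norm_num)]
        have := hLadd θ θ'
        linarith
      refine ⟨(1 / 2 : ℝ) • (θ + θ'), ?_⟩
      rw [Fin.forall_fin_two]
      simp only [Matrix.cons_val_zero, Matrix.cons_val_one, Matrix.head_cons]
      constructor
      · have := mul_le_mul_of_nonneg_left hLm hε.le
        linarith
      · apply mul_lt_mul_of_pos_left _ hone
        linarith
  · intro hE
    rintro ⟨θ, hlt⟩
    exact hE ⟨θ, fun i => (hlt i).le, 0, hlt 0⟩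

theorem stmt_16 {m n : ℕ} (A : Matrix (Fin m) (Fin n) ℝ) (y : Fin m → ℝ)
    (ε : ℝ) (hε : 0 < ε) :
    WEff2 (fun θ =>
        ![1 / (2 * m) * ∑ j, (A.mulVec θ j - y j) ^ 2 + ε * ∑ i, |θ i|,
          (1 + ε) * ∑ i, |θ i|]) =
      Eff2 (fun θ =>
        ![1 / (2 * m) * ∑ j, (A.mulVec θ j - y j) ^ 2 + ε * ∑ i, |θ i|,
          (1 + ε) * ∑ i, |θ i|]) := by
  apply key (fun θ => 1 / (2 * (m:ℝ)) * ∑ j, (A.mulVec θ j - y j) ^ 2)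
    (fun θ => ∑ i, |θ i|) ε hε
  · intro θ
    exact Finset.sum_nonneg fun i _ => abs_nonneg _
  · intro θ h
    funext i
    have := (Finset.sum_eq_zero_iff_of_nonneg (fun i _ => abs_nonneg (θ i))).1 h i
      (Finset.mem_univ i)
    simpa using abs_eq_zero.1 this
  · intro c θ hc
    simp only [Pi.smul_apply, smul_eq_mul, abs_mul, abs_of_nonneg hc, ← Finset.mul_sum]
  · intro θ θ'
    calc ∑ i, |(θ + θ') i| ≤ ∑ i, (|θ i| + |θ' i|) :=
          Finset.sum_le_sum fun i _ => by simpa using abs_add_le (θ i) (θ' i)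
      _ = ∑ i, |θ i| + ∑ i, |θ' i| := Finset.sum_add_distrib
  · intro θ t ht0 ht1
    have hm : (0:ℝ) ≤ 1 / (2 * (m:ℝ)) := by positivity
    calc 1 / (2 * (m:ℝ)) * ∑ j, (A.mulVec ((1 - t) • θ) j - y j) ^ 2
        ≤ 1 / (2 * (m:ℝ)) * ∑ j, ((1 - t) * (A.mulVec θ j - y j) ^ 2
            + t * (A.mulVec (0 : Fin n → ℝ) j - y j) ^ 2) := by
          apply mul_le_mul_of_nonneg_left _ hm
          apply Finset.sum_le_sum
          intro j _
          rw [Matrix.mulVec_smul, Matrix.mulVec_zero]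
          have h := sq_combo (A.mulVec θ j - y j) (0 - y j) t ht0 ht1
          have he : (1 - t) * (A.mulVec θ j - y j) + t * (0 - y j)
              = (1 - t) • A.mulVec θ j - y j := by
            simp [Pi.smul_apply, smul_eq_mul]; ring
          rw [he] at h
          simpa using h
      _ = (1 - t) * (1 / (2 * (m:ℝ)) * ∑ j, (A.mulVec θ j - y j) ^ 2)
          + t * (1 / (2 * (m:ℝ)) * ∑ j, (A.mulVec (0 : Fin n → ℝ) j - y j) ^ 2) := by
          rw [Finset.sum_add_distrib, ← Finset.mul_sum, ← Finset.mul_sum]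
          ring
  · intro θ θ' hlt
    rcases Nat.eq_zero_or_pos m with hm | hm
    · subst hm
      norm_num at hlt
    have hκ : (0:ℝ) < 1 / (2 * (m:ℝ)) := by positivity
    set S : ℝ := ∑ j, (A.mulVec θ j - A.mulVec θ' j) ^ 2 with hS_def
    have hSnn : 0 ≤ S := Finset.sum_nonneg fun j _ => sq_nonneg _
    have hmid : ∑ j, (A.mulVec ((1/2 : ℝ) • (θ + θ')) j - y j) ^ 2
        = (∑ j, (A.mulVec θ j - y j) ^ 2 + ∑ j, (A.mulVec θ' j - y j) ^ 2) / 2 - S / 4 := by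
      rw [hS_def]
      rw [← Finset.sum_add_distrib, Finset.sum_div, Finset.sum_div, ← Finset.sum_sub_distrib]
      apply Finset.sum_congr rfl
      intro j _
      rw [Matrix.mulVec_smul, Matrix.mulVec_add]
      simp only [Pi.smul_apply, Pi.add_apply, smul_eq_mul]
      ring
    have hSpos : 0 < S := by
      rcases hSnn.lt_or_eq with h | h
      · exact h
      · exfalso
        have heq : ∀ j, A.mulVec θ j = A.mulVec θ' j := by
          intro j
          have hz := (Finset.sum_eq_zero_iff_of_nonneg (fun j _ => sq_nonneg
            (A.mulVec θ j - A.mulVec θ' j))).1 h.symm j (Finset.mem_univ j)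
          have := sq_eq_zero_iff.1 hz
          linarith
        have : ∑ j, (A.mulVec θ j - y j) ^ 2 = ∑ j, (A.mulVec θ' j - y j) ^ 2 :=
          Finset.sum_congr rfl fun j _ => by rw [heq j]
        rw [this] at hlt
        exact lt_irrefl _ hlt
    rw [hmid]
    have hp : 0 < 1 / (2 * (m:ℝ)) * (S / 4) := by positivity
    nlinarith [hp]
end

section
/- Let X be a real m × n matrix, y ∈ ℝ^m, ε > 0, and f̃_1(θ) = (1/(2m))‖Xθ − y‖² + ε|θ|₁. If θ* and θ̃* are both global minimizers of f̃_1 on ℝ^n, then ‖Xθ* − y‖² = ‖Xθ̃* − y‖² and |θ*|₁ = |θ̃*|₁. -/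
theorem stmt_17 {m n : ℕ} (A : Matrix (Fin m) (Fin n) ℝ) (y : Fin m → ℝ)
    (ε : ℝ) (hε : 0 < ε) (θs θt : Fin n → ℝ)
    (hθs : ∀ θ : Fin n → ℝ,
      1 / (2 * m) * ∑ j, (A.mulVec θs j - y j) ^ 2 + ε * ∑ i, |θs i| ≤
        1 / (2 * m) * ∑ j, (A.mulVec θ j - y j) ^ 2 + ε * ∑ i, |θ i|)
    (hθt : ∀ θ : Fin n → ℝ,
      1 / (2 * m) * ∑ j, (A.mulVec θt j - y j) ^ 2 + ε * ∑ i, |θt i| ≤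
        1 / (2 * m) * ∑ j, (A.mulVec θ j - y j) ^ 2 + ε * ∑ i, |θ i|) :
    (∑ j, (A.mulVec θs j - y j) ^ 2 = ∑ j, (A.mulVec θt j - y j) ^ 2) ∧
      (∑ i, |θs i| = ∑ i, |θt i|) := by
  set c : ℝ := 1 / (2 * m) with hc
  set Qs := ∑ j, (A.mulVec θs j - y j) ^ 2 with hQs
  set Qt := ∑ j, (A.mulVec θt j - y j) ^ 2 with hQt
  set Ls := ∑ i, |θs i| with hLs
  set Lt := ∑ i, |θt i| with hLt
  have hval : c * Qs + ε * Ls = c * Qt + ε * Lt := le_antisymm (hθs θt) (hθt θs)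
  rcases Nat.eq_zero_or_pos m with hm | hm
  · subst hm
    have hQs0 : Qs = 0 := by simp [hQs]
    have hQt0 : Qt = 0 := by simp [hQt]
    refine ⟨hQs0.trans hQt0.symm, ?_⟩
    have : ε * Ls = ε * Lt := by rw [hQs0, hQt0] at hval; linarith
    exact mul_left_cancel₀ hε.ne' this
  · have hcpos : 0 < c := by
      rw [hc]
      positivity
    set θm : Fin n → ℝ := fun i => (θs i + θt i) / 2 with hθm
    have hmul : ∀ j, A.mulVec θm j = (A.mulVec θs j + A.mulVec θt j) / 2 := by
      intro j
      simp only [Matrix.mulVec, dotProduct, hθm, ← Finset.sum_add_distrib,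
        ← Finset.sum_div]
      rw [Finset.sum_div]
      exact Finset.sum_congr rfl fun i _ => by ring
    set D := ∑ j, ((A.mulVec θs j - A.mulVec θt j) / 2) ^ 2 with hD
    have hQm : ∑ j, (A.mulVec θm j - y j) ^ 2 = (Qs + Qt) / 2 - D := by
      have e : ∀ j : Fin m, (A.mulVec θm j - y j) ^ 2 +
          ((A.mulVec θs j - A.mulVec θt j) / 2) ^ 2 =
          ((A.mulVec θs j - y j) ^ 2 + (A.mulVec θt j - y j) ^ 2) / 2 := by
        intro j
        rw [hmul j]
        ring
      have hsum := Finset.sum_congr rfl (fun j (_ : j ∈ Finset.univ) => e j)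
      rw [Finset.sum_add_distrib, ← Finset.sum_div, Finset.sum_add_distrib] at hsum
      rw [hQs, hQt, hD]
      linarith [hsum]
    have hLm : ∑ i, |θm i| ≤ (Ls + Lt) / 2 := by
      have h1 : ∑ i, |θm i| ≤ ∑ i, (|θs i| + |θt i|) / 2 := by
        apply Finset.sum_le_sum
        intro i _
        rw [hθm]
        have := abs_add_le (θs i) (θt i)
        rw [abs_div, abs_two]
        linarith
      rw [← Finset.sum_div, Finset.sum_add_distrib] at h1
      rw [hLs, hLt]
      exact h1
    have key := hθs θm
    rw [hQm] at key
    have hD0 : D ≤ 0 := by nlinarith [key, hLm, hval]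
    have hDnn : 0 ≤ D := Finset.sum_nonneg fun j _ => sq_nonneg _
    have hDeq : D = 0 := le_antisymm hD0 hDnn
    have heq : ∀ j, A.mulVec θs j = A.mulVec θt j := by
      intro j
      have h0 := (Finset.sum_eq_zero_iff_of_nonneg (fun j _ => sq_nonneg
        ((A.mulVec θs j - A.mulVec θt j) / 2))).mp hDeq j (Finset.mem_univ j)
      have h2 : (A.mulVec θs j - A.mulVec θt j) / 2 = 0 :=
        pow_eq_zero_iff (n := 2) (by norm_num) |>.mp h0
      have h3 := (div_eq_zero_iff.mp h2).resolve_right (by norm_num : (2:ℝ) ≠ 0)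
      linarith
    have hQeq : Qs = Qt := by
      rw [hQs, hQt]
      exact Finset.sum_congr rfl fun j _ => by rw [heq j]
    refine ⟨hQeq, ?_⟩
    have : ε * Ls = ε * Lt := by rw [hQeq] at hval; linarith
    exact mul_left_cancel₀ hε.ne' this
end
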